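/- For n ≥ 4, R(F_n, F_n) ≥ ⌈9n/2⌉, where F_n = K_1 + nK_2 is the fan on 2n+1 vertices. -/

import Mathlib

open SimpleGraph

/-- `H` is contained in `G` as a subgraph. -/
def Contains {α β : Type*} (G : SimpleGraph α) (H : SimpleGraph β) : Prop :=
  ∃ f : H →g G, Function.Injective f

/-- Every red/blue coloring of `K_N` (red = `C`, blue = `Cᶜ`) has a red `G` or blue `H`. -/
def RamseyProp {α β : Type*} (N : ℕ) (G : SimpleGraph α) (H : SimpleGraph β) : Prop :=
  ∀ C : SimpleGraph (Fin N), Contains C G ∨ Contains Cᶜ H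

/-- The Ramsey number `R(G, H)`. -/
noncomputable def ramseyNumber {α β : Type*} (G : SimpleGraph α) (H : SimpleGraph β) : ℕ :=
  sInf {N | RamseyProp N G H}

/-- The join `G + H`: disjoint union plus all edges in between. -/
def graphJoin {α β : Type*} (G : SimpleGraph α) (H : SimpleGraph β) : SimpleGraph (α ⊕ β) :=
  SimpleGraph.fromRel (fun x y =>
    match x, y with
    | Sum.inl a, Sum.inl b => G.Adj a b
    | Sum.inr a, Sum.inr b => H.Adj a b
    | _, _ => True)

/-- The wheel `W_n = K_1 + C_{n-1}` on `n` vertices. -/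
def wheel (n : ℕ) : SimpleGraph (Fin 1 ⊕ Fin (n - 1)) :=
  graphJoin ⊥ (SimpleGraph.cycleGraph (n - 1))

/-- A perfect matching `k • K_2` on `2k` vertices. -/
def matching (k : ℕ) : SimpleGraph (Fin k × Fin 2) :=
  SimpleGraph.fromRel (fun x y => x.1 = y.1)

/-- The fan `F_k = K_1 + k • K_2`. -/
def fan (k : ℕ) : SimpleGraph (Fin 1 ⊕ Fin k × Fin 2) :=
  graphJoin ⊥ (matching k)

/-- The kipas `K̂_n = K_1 + P_{n-1}` on `n` vertices. -/
def kipas (n : ℕ) : SimpleGraph (Fin 1 ⊕ Fin (n - 1)) :=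
  graphJoin ⊥ (SimpleGraph.pathGraph (n - 1))

/-- The blow-up `G[K_2]`: each vertex replaced by an adjacent pair; vertices in
different pairs adjacent iff the original vertices are adjacent. -/
def blowUp {α : Type*} (G : SimpleGraph α) : SimpleGraph (α × Fin 2) :=
  SimpleGraph.fromRel (fun x y => x.1 = y.1 ∨ G.Adj x.1 y.1)

/-!
Split `4n + ⌈n/2⌉ - 1` vertices into five red cliques of sizes `⌈n/2⌉ - 1, n - 1, ⌊n/2⌋,
⌈n/2⌉ + 1, 2n` and colour blue exactly the edges between parts `0`–`1`, `2`–`3`, and between part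
`4` and all other parts. Every vertex then has at most `2n - 1` red neighbours, so there is no red
`F_n`, whose centre has degree `2n`. Among the blue neighbours of any vertex, all blue edges meet a
set of fewer than `n` vertices (a single part, or parts `0` and `2`), so they contain no `n`
disjoint edges and there is no blue `F_n` either. Since `R(F_n, F_n)` is finite (Erdős–Szekeres),
this colouring bounds it from below.
-/

open Finset

lemma contains_iff_isContained {α β : Type*} {G : SimpleGraph α} {H : SimpleGraph β} :
    Contains G H ↔ H ⊑ G :=
  ⟨fun ⟨f, hf⟩ => ⟨⟨f, hf⟩⟩, fun ⟨f⟩ => ⟨f.toHom, f.injective⟩⟩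

lemma contains_of_isNClique {α β : Type*} [Fintype β] {G : SimpleGraph α} {S : Finset α}
    (hS : G.IsNClique (Fintype.card β) S) (H : SimpleGraph β) : Contains G H := by
  rw [contains_iff_isContained]
  exact (IsContained.of_le le_top).trans
    (not_free.1 (cliqueFree_iff_top_free.not.1 fun h => h S hS))

theorem exists_isNClique_or_isNClique_compl {V : Type*} (G : SimpleGraph V)
    (s t : ℕ) (U : Finset V) (hU : 2 ^ (s + t) ≤ #U) :
    (∃ S ⊆ U, G.IsNClique s S) ∨ ∃ S ⊆ U, Gᶜ.IsNClique t S := by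
  classical
  induction s generalizing t U with
  | zero => exact Or.inl ⟨∅, empty_subset U, isNClique_empty.2 rfl⟩
  | succ s ihs =>
  induction t generalizing U with
  | zero => exact Or.inr ⟨∅, empty_subset U, isNClique_empty.2 rfl⟩
  | succ t iht =>
    obtain ⟨v, hv⟩ : U.Nonempty := card_pos.1 (Nat.one_le_two_pow.trans hU)
    set A := {w ∈ U | G.Adj v w}
    set B := {w ∈ U | Gᶜ.Adj v w}
    have hcover : U ⊆ insert v (A ∪ B) := by
      intro w hw
      by_cases hwv : w = v
      · simp [hwv]
      · by_cases hadj : G.Adj v w <;> simp [A, B, hw, hadj, Ne.symm hwv]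
    have hsplit : #U ≤ #A + #B + 1 :=
      (card_le_card hcover).trans ((card_insert_le _ _).trans (by grw [card_union_le]))
    have hpow : 2 ^ (s + 1 + (t + 1)) = 2 ^ (s + (t + 1)) + 2 ^ (s + 1 + t) := by ring
    rcases le_or_gt (2 ^ (s + (t + 1))) #A with hA | hA
    · rcases ihs (t + 1) A hA with ⟨S, hSA, hS⟩ | ⟨S, hSA, hS⟩
      · refine Or.inl ⟨insert v S, insert_subset hv (hSA.trans (filter_subset _ _)), ?_⟩
        exact hS.insert fun w hw => (mem_filter.1 (hSA hw)).2
      · exact Or.inr ⟨S, hSA.trans (filter_subset _ _), hS⟩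
    · rcases iht B (by omega) with ⟨S, hSB, hS⟩ | ⟨S, hSB, hS⟩
      · exact Or.inl ⟨S, hSB.trans (filter_subset _ _), hS⟩
      · refine Or.inr ⟨insert v S, insert_subset hv (hSB.trans (filter_subset _ _)), ?_⟩
        exact hS.insert fun w hw => (mem_filter.1 (hSB hw)).2

theorem ramseyProp_two_pow {α β : Type*} [Fintype α] [Fintype β] (G : SimpleGraph α)
    (H : SimpleGraph β) : RamseyProp (2 ^ (Fintype.card α + Fintype.card β)) G H := by
  intro C
  rcases exists_isNClique_or_isNClique_compl C (Fintype.card α) (Fintype.card β) univ (by simp)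
    with ⟨S, -, hS⟩ | ⟨S, -, hS⟩
  · exact Or.inl (contains_of_isNClique hS G)
  · exact Or.inr (contains_of_isNClique hS H)

theorem RamseyProp.mono {α β : Type*} {G : SimpleGraph α} {H : SimpleGraph β} {M N : ℕ}
    (h : RamseyProp M G H) (hMN : M ≤ N) : RamseyProp N G H := by
  intro C
  let e := Fin.castLEEmb hMN
  have hred : C.comap e ⊑ C := (Embedding.comap e C).isContained
  have hblue : (C.comap e)ᶜ ⊑ Cᶜ :=
    ⟨⟨⟨e, fun h => ⟨e.injective.ne h.1, h.2⟩⟩, e.injective⟩⟩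
  simp only [RamseyProp, contains_iff_isContained] at h ⊢
  exact (h (C.comap e)).imp (·.trans hred) (·.trans hblue)

theorem lt_ramseyNumber_of_not_ramseyProp {α β : Type*} {G : SimpleGraph α}
    {H : SimpleGraph β} {N : ℕ} (hex : ∃ M, RamseyProp M G H) (hN : ¬RamseyProp N G H) :
    N < ramseyNumber G H :=
  le_csInf hex fun _ hM => not_le.1 fun hle => hN (RamseyProp.mono hM hle)

lemma fan_adj_center (n : ℕ) (x : Fin n × Fin 2) : (fan n).Adj (Sum.inl 0) (Sum.inr x) := by
  simp [fan, graphJoin]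

lemma fan_adj_pair {n : ℕ} (i : Fin n) : (fan n).Adj (Sum.inr (i, 0)) (Sum.inr (i, 1)) := by
  simp [fan, graphJoin, matching]

theorem Contains.exists_two_mul_le_degree {V : Type*} [Fintype V] {G : SimpleGraph V}
    [DecidableRel G.Adj] {n : ℕ} (h : Contains G (fan n)) : ∃ v, 2 * n ≤ G.degree v := by
  obtain ⟨f, hf⟩ := h
  refine ⟨f (Sum.inl 0), ?_⟩
  let spokes : Fin n × Fin 2 ↪ V := ⟨fun x => f (Sum.inr x), hf.comp Sum.inr_injective⟩
  calc 2 * n = #(univ.map spokes) := by simp [mul_comm]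
    _ ≤ G.degree (f (Sum.inl 0)) := by
      rw [← card_neighborFinset_eq_degree]
      refine card_le_card fun w hw => ?_
      obtain ⟨x, -, rfl⟩ := mem_map.1 hw
      exact (mem_neighborFinset _ _ _).2 (f.map_adj (fan_adj_center n x))

theorem Contains.exists_le_card_of_cover {V : Type*} {G : SimpleGraph V} {n : ℕ}
    (h : Contains G (fan n)) :
    ∃ v, ∀ S : Finset V, (∀ x y, G.Adj v x → G.Adj v y → G.Adj x y → x ∈ S ∨ y ∈ S) →
      n ≤ #S := by
  obtain ⟨f, hf⟩ := h
  refine ⟨f (Sum.inl 0), fun S hS => ?_⟩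
  have hmeet : ∀ i : Fin n, ∃ x ∈ S, x = f (Sum.inr (i, 0)) ∨ x = f (Sum.inr (i, 1)) := by
    intro i
    rcases hS _ _ (f.map_adj (fan_adj_center n _)) (f.map_adj (fan_adj_center n _))
      (f.map_adj (fan_adj_pair i)) with h | h
    exacts [⟨_, h, Or.inl rfl⟩, ⟨_, h, Or.inr rfl⟩]
  choose g hgS hg using hmeet
  have hspoke : ∀ i j (a b : Fin 2), f (Sum.inr (i, a)) = f (Sum.inr (j, b)) → i = j :=
    fun i j a b hij => by simpa using (Prod.ext_iff.1 (Sum.inr_injective (hf hij))).1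
  have hinj : Set.InjOn g (univ : Finset (Fin n)) := by
    intro i _ j _ hij
    rcases hg i with hi | hi <;> rcases hg j with hj | hj <;>
      exact hspoke i j _ _ (hi.symm.trans (hij.trans hj))
  simpa using card_le_card_of_injOn g (fun i _ => hgS i) hinj

section Pattern

variable {ι V : Type*} [Fintype V] (P : SimpleGraph ι) (p : V → ι)

theorem not_contains_fan_compl_comap [DecidableRel P.Adj] {n : ℕ}
    (h : ∀ i, #{w | ¬P.Adj i (p w)} ≤ 2 * n) : ¬Contains (P.comap p)ᶜ (fan n) := by
  classical
  intro hC
  obtain ⟨v, hv⟩ := hC.exists_two_mul_le_degree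
  have hsub :
      insert v ((P.comap p)ᶜ.neighborFinset v) ⊆ ({w | ¬P.Adj (p v) (p w)} : Finset V) := by
    intro w hw
    rcases mem_insert.1 hw with rfl | hw
    · simp
    · simpa using ((mem_neighborFinset _ _ _).1 hw).2
  have := card_le_card hsub
  rw [card_insert_of_notMem (notMem_neighborFinset_self _ _), card_neighborFinset_eq_degree]
    at this
  have := h (p v)
  omega

theorem not_contains_fan_comap [DecidableEq ι] {n : ℕ} (T : ι → Finset ι)
    (hT : ∀ i j k, P.Adj i j → P.Adj i k → P.Adj j k → j ∈ T i ∨ k ∈ T i)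
    (h : ∀ i, #{w | p w ∈ T i} < n) : ¬Contains (P.comap p) (fan n) := by
  intro hC
  obtain ⟨v, hv⟩ := hC.exists_le_card_of_cover
  have := hv {w | p w ∈ T (p v)} fun x y hx hy hxy => by simpa using hT _ _ _ hx hy hxy
  exact (h (p v)).not_ge this

end Pattern

theorem card_filter_sigma_fst {ι V : Type*} [Fintype ι] [Fintype V] {s : ι → ℕ}
    (e : V ≃ Σ i, Fin (s i)) (q : ι → Prop) [DecidablePred q] :
    #{w | q (e w).1} = ∑ i with q i, s i := by
  calc #{w | q (e w).1} = #((univ.filter q).sigma fun _ => univ) := card_equiv e (by simp)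
    _ = ∑ i with q i, s i := by simp [card_sigma]

/-- Blown up along parts of sizes `fanPartSizes n`, this bowtie `F_2` (centre `4`) is the blue
graph of the colouring. -/
def bowtie : SimpleGraph (Fin 5) where
  Adj i j := i ≠ j ∧ (i = 4 ∨ j = 4 ∨ i.val / 2 = j.val / 2)
  symm := ⟨fun _ _ h => ⟨h.1.symm, by omega⟩⟩
  loopless := ⟨fun _ h => h.1 rfl⟩

instance : DecidableRel bowtie.Adj := fun i j =>
  inferInstanceAs (Decidable (i ≠ j ∧ (i = 4 ∨ j = 4 ∨ i.val / 2 = j.val / 2)))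

def fanPartSizes (n : ℕ) : Fin 5 → ℕ := ![(n - 1) / 2, n - 1, n / 2, (n - 1) / 2 + 2, 2 * n]

theorem not_ramseyProp_fan {n : ℕ} (hn : 4 ≤ n) :
    ¬RamseyProp (4 * n + (n - 1) / 2) (fan n) (fan n) := by
  have hN : 4 * n + (n - 1) / 2 = ∑ i, fanPartSizes n i := by
    simp only [fanPartSizes, Fin.sum_univ_five, Matrix.cons_val_zero, Matrix.cons_val_one,
      Matrix.cons_val]
    omega
  let e := (finCongr hN).trans finSigmaFinEquiv.symm
  intro hR
  rcases hR (bowtie.comap fun w => (e w).1)ᶜ with h | h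
  · refine not_contains_fan_compl_comap bowtie _ (fun i => ?_) h
    rw [card_filter_sigma_fst e fun j => ¬bowtie.Adj i j]
    fin_cases i <;> simp [sum_filter, Fin.sum_univ_five, fanPartSizes, bowtie] <;> omega
  · rw [compl_compl] at h
    let T : Fin 5 → Finset (Fin 5) := ![{1}, {0}, {3}, {2}, {0, 2}]
    refine not_contains_fan_comap bowtie _ T (by decide) (fun i => ?_) h
    rw [card_filter_sigma_fst e (· ∈ T i)]
    fin_cases i <;> simp [T, sum_filter, Fin.sum_univ_five, fanPartSizes] <;> omega

theorem stmt_16 (n : ℕ) (hn : 4 ≤ n) :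
    (9 * n + 1) / 2 ≤ ramseyNumber (fan n) (fan n) := by
  have := lt_ramseyNumber_of_not_ramseyProp ⟨_, ramseyProp_two_pow (fan n) (fan n)⟩
    (not_ramseyProp_fan hn)
  omega
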